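/- Let κ be a quaternionic spinor, and for each paravector v let D(v) be the 2×2 quaternionic matrix D(v) = κ·(conjugate transpose of κ̌v) + (κ̌v)·(conjugate transpose of κ). Then for all paravectors v, w: 2·( pdet(D(v)+D(w)) − pdet(D(v)) − pdet(D(w)) ) = −4 |κ|⁴ · Re(v w̄). (The left side is the Minkowski inner product ⟨D(v), D(w)⟩ in ℝ^{1,4} under the identification of paravector Hermitian matrices S with points p ∈ ℝ^{1,4} satisfying 4·pdet S = ⟨p,p⟩; thus the derivative of φ₁ is conformal on the paravector directions with scaling factor −4|κ|⁴.) -/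

import Mathlib

open Quaternion

noncomputable section

/-- The involution `q* = a + bi + cj - dk` on quaternions (Clifford reversion). -/
def qstar (q : ℍ[ℝ]) : ℍ[ℝ] := ⟨q.re, q.imI, q.imJ, -q.imK⟩

/-- The involution `q' = a - bi - cj + dk` on quaternions. -/
def qprime (q : ℍ[ℝ]) : ℍ[ℝ] := ⟨q.re, -q.imI, -q.imJ, q.imK⟩

/-- A paravector is an element of `ℝ + ℝi + ℝj`, i.e. a quaternion with zero `k`-component. -/
def IsParavector (q : ℍ[ℝ]) : Prop := q.imK = 0

/-- The quaternion `k`. -/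
def qk : ℍ[ℝ] := ⟨0, 0, 0, 1⟩

/-- A quaternionic spinor: a pair `(ξ, η) ≠ (0,0)` with `ξ * conj η` a paravector. -/
def IsSpinor (κ : ℍ[ℝ] × ℍ[ℝ]) : Prop := κ ≠ 0 ∧ IsParavector (κ.1 * star κ.2)

/-- The bracket `{κ₁, κ₂} = ξ₁* η₂ − η₁* ξ₂`. -/
def bracket (κ₁ κ₂ : ℍ[ℝ] × ℍ[ℝ]) : ℍ[ℝ] := qstar κ₁.1 * κ₂.2 - qstar κ₁.2 * κ₂.1

/-- Right multiplication `κ x = (ξ x, η x)`. -/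
def rmul (κ : ℍ[ℝ] × ℍ[ℝ]) (x : ℍ[ℝ]) : ℍ[ℝ] × ℍ[ℝ] := (κ.1 * x, κ.2 * x)

/-- The complementary pair `κ̌ = (η', −ξ')`. -/
def qcheck (κ : ℍ[ℝ] × ℍ[ℝ]) : ℍ[ℝ] × ℍ[ℝ] := (qprime κ.2, -qprime κ.1)

/-- The real inner product on `ℍ²`: `⟨κ₁, κ₂⟩ = Re (ξ₁ ξ̄₂ + η₁ η̄₂)`. -/
def qinner (κ₁ κ₂ : ℍ[ℝ] × ℍ[ℝ]) : ℝ := (κ₁.1 * star κ₂.1 + κ₁.2 * star κ₂.2).re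

/-- The squared norm `|κ|² = |ξ|² + |η|²` on `ℍ²`. -/
def qnsq (κ : ℍ[ℝ] × ℍ[ℝ]) : ℝ := Quaternion.normSq κ.1 + Quaternion.normSq κ.2

/-- The pseudo-determinant of a 2×2 quaternionic matrix: `pdet [[a,b],[c,d]] = a* d − c* b`. -/
def pdet (A : Matrix (Fin 2) (Fin 2) ℍ[ℝ]) : ℍ[ℝ] := qstar (A 0 0) * A 1 1 - qstar (A 1 0) * A 0 1

/-- A Clifford matrix: columns are quaternionic spinors and the pseudo-determinant is 1. -/
def IsClifford (A : Matrix (Fin 2) (Fin 2) ℍ[ℝ]) : Prop :=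
  IsSpinor (A 0 0, A 1 0) ∧ IsSpinor (A 0 1, A 1 1) ∧ pdet A = 1

/-- Matrix-vector action of a 2×2 quaternionic matrix on a column vector in `ℍ²`. -/
def mact (A : Matrix (Fin 2) (Fin 2) ℍ[ℝ]) (κ : ℍ[ℝ] × ℍ[ℝ]) : ℍ[ℝ] × ℍ[ℝ] :=
  (A 0 0 * κ.1 + A 0 1 * κ.2, A 1 0 * κ.1 + A 1 1 * κ.2)

/-- The derivative matrix `D(v) = κ (κ̌v)̄ᵀ + (κ̌v) κ̄ᵀ` of the map `φ₁(κ) = κ κ̄ᵀ`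
in the direction `κ̌v`. -/
def Dmat (κ : ℍ[ℝ] × ℍ[ℝ]) (v : ℍ[ℝ]) : Matrix (Fin 2) (Fin 2) ℍ[ℝ] :=
  !![κ.1 * star v * qstar κ.2 + qprime κ.2 * v * star κ.1,
     -(κ.1 * star v * qstar κ.1) + qprime κ.2 * v * star κ.2;
     κ.2 * star v * qstar κ.2 - qprime κ.1 * v * star κ.1,
     -(κ.2 * star v * qstar κ.1) - qprime κ.1 * v * star κ.2]

/-! The derivative `D(u) = κ (κ̌u)† + (κ̌u) κ†` is a Hermitian matrix with real diagonal and
paravector off-diagonal entries, and for a paravector direction `u` its pseudo-determinant is the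
real number `-(|κ|⁴ - 4 (ξη̄)ₖ²) |u|²`. For a spinor the `k`-component of `ξη̄` vanishes, so
`u ↦ pdet D(u)` is `-|κ|⁴` times the Euclidean quadratic form on paravectors; since `D` is linear
in `u`, polarising gives the theorem. -/

section Components

variable (q : ℍ[ℝ])

@[simp] theorem re_qstar : (qstar q).re = q.re := rfl
@[simp] theorem imI_qstar : (qstar q).imI = q.imI := rfl
@[simp] theorem imJ_qstar : (qstar q).imJ = q.imJ := rfl
@[simp] theorem imK_qstar : (qstar q).imK = -q.imK := rfl
@[simp] theorem re_qprime : (qprime q).re = q.re := rfl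
@[simp] theorem imI_qprime : (qprime q).imI = -q.imI := rfl
@[simp] theorem imJ_qprime : (qprime q).imJ = -q.imJ := rfl
@[simp] theorem imK_qprime : (qprime q).imK = q.imK := rfl

end Components

theorem IsParavector.add {v w : ℍ[ℝ]} (hv : IsParavector v) (hw : IsParavector w) :
    IsParavector (v + w) := by
  rw [IsParavector, Quaternion.imK_add, hv, hw, add_zero]

theorem Dmat_add (κ : ℍ[ℝ] × ℍ[ℝ]) (v w : ℍ[ℝ]) : Dmat κ v + Dmat κ w = Dmat κ (v + w) := by
  refine Matrix.ext fun i j => ?_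
  fin_cases i <;> fin_cases j <;>
    simp only [Dmat, Fin.mk_one, Fin.isValue, Fin.zero_eta, Matrix.add_apply, Matrix.of_apply,
      Matrix.cons_val', Matrix.cons_val_zero, Matrix.cons_val_one, Matrix.cons_val_fin_one,
      star_add, mul_add, add_mul, neg_add_rev] <;>
    abel

theorem pdet_Dmat (κ : ℍ[ℝ] × ℍ[ℝ]) {u : ℍ[ℝ]} (hu : IsParavector u) :
    pdet (Dmat κ u) =
      -(((qnsq κ ^ 2 - 4 * (κ.1 * star κ.2).imK ^ 2) * normSq u : ℝ) : ℍ[ℝ]) := by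
  rw [IsParavector] at hu
  simp only [Dmat, pdet, qnsq, Quaternion.ext_iff, Matrix.of_apply, Matrix.cons_val',
    Matrix.cons_val_zero, Matrix.cons_val_one, Matrix.empty_val', Matrix.cons_val_fin_one,
    Quaternion.re_mul, Quaternion.imI_mul, Quaternion.imJ_mul, Quaternion.imK_mul,
    Quaternion.re_add, Quaternion.imI_add, Quaternion.imJ_add, Quaternion.imK_add,
    Quaternion.re_sub, Quaternion.imI_sub, Quaternion.imJ_sub, Quaternion.imK_sub,
    Quaternion.re_neg, Quaternion.imI_neg, Quaternion.imJ_neg, Quaternion.imK_neg,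
    Quaternion.re_star, Quaternion.imI_star, Quaternion.imJ_star, Quaternion.imK_star,
    Quaternion.re_coe, Quaternion.imI_coe, Quaternion.imJ_coe, Quaternion.imK_coe,
    Quaternion.normSq_def', re_qstar, imI_qstar, imJ_qstar, imK_qstar,
    re_qprime, imI_qprime, imJ_qprime, imK_qprime, hu]
  refine ⟨?_, ?_, ?_, ?_⟩ <;> ring

theorem IsSpinor.pdet_Dmat {κ : ℍ[ℝ] × ℍ[ℝ]} (hκ : IsSpinor κ) {u : ℍ[ℝ]}
    (hu : IsParavector u) : pdet (Dmat κ u) = -((qnsq κ ^ 2 * normSq u : ℝ) : ℍ[ℝ]) := by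
  rw [_root_.pdet_Dmat κ hu, show (κ.1 * star κ.2).imK = 0 from hκ.2]
  norm_num

/-- The derivative of `φ₁` is conformal on paravector directions with scaling factor
`−4|κ|⁴`: polarising the pseudo-determinant,
`2 (pdet (D(v)+D(w)) − pdet D(v) − pdet D(w)) = −4 |κ|⁴ Re(v w̄)`. -/
theorem derivative_conformal (κ : ℍ[ℝ] × ℍ[ℝ]) (hκ : IsSpinor κ) (v w : ℍ[ℝ])
    (hv : IsParavector v) (hw : IsParavector w) :
    2 * (pdet (Dmat κ v + Dmat κ w) - pdet (Dmat κ v) - pdet (Dmat κ w)) =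
      -(((4 * qnsq κ ^ 2 * (v * star w).re : ℝ)) : ℍ[ℝ]) := by
  rw [Dmat_add, hκ.pdet_Dmat (hv.add hw), hκ.pdet_Dmat hv, hκ.pdet_Dmat hw, normSq_add]
  show ((2 : ℝ) : ℍ[ℝ]) * _ = _
  norm_cast
  congr 1
  ring
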